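/- Let G be an s-vertex-connected graph (more precisely: let S be an s-vertex cut of G with components C_1,…,C_k of G−S having sizes c_1,…,c_k). If G is recursively partitionable, then the semistar K_s(c_1,…,c_k) is recursively partitionable. -/

import Mathlib

open Finset

/-- `G.IsRP A` : the subgraph of `G` induced by the vertex set `A` is recursively
partitionable (RP): either `|A| = 1`, or `G[A]` is connected and for every integer partition
`a₁, …, a_k` (with `k ≥ 2`) of `|A|` there is a partition of `A` into parts of exactly these
sizes, each of which again induces an RP subgraph.  (The guard `B.card < A.card` is
automatically satisfied by every part of such a partition; it is only needed for
well-foundedness of the recursion.) -/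
def SimpleGraph.IsRP {V : Type} [DecidableEq V] (G : SimpleGraph V) (A : Finset V) : Prop :=
  A.card = 1 ∨ ((G.induce (A : Set V)).Connected ∧
    ∀ l : List ℕ, (∀ a ∈ l, 0 < a) → 2 ≤ l.length → l.sum = A.card →
      ∃ P : List (Finset V), P.map Finset.card = l ∧ P.Pairwise _root_.Disjoint ∧
        P.foldr (· ∪ ·) ∅ = A ∧ ∀ B ∈ P, ∀ _ : B.card < A.card, G.IsRP B)
termination_by A.card

/-- The join `G₀ + (G₁ ∪ ⋯ ∪ G_k)` of a graph `G₀` with the disjoint union of the graphs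
`G i`, `i : Fin k`: every vertex of `G₀` is joined to every other vertex. -/
def SimpleGraph.repJoin {V₀ : Type} {k : ℕ} {V : Fin k → Type}
    (G₀ : SimpleGraph V₀) (G : ∀ i, SimpleGraph (V i)) :
    SimpleGraph (V₀ ⊕ Σ i, V i) where
  Adj a b :=
    match a, b with
    | Sum.inl x, Sum.inl y => G₀.Adj x y
    | Sum.inl _, Sum.inr _ => True
    | Sum.inr _, Sum.inl _ => True
    | Sum.inr x, Sum.inr y => ∃ h : x.1 = y.1, (G y.1).Adj (h ▸ x.2) y.2
  symm := by
    constructor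
    rintro (x | ⟨i, x⟩) (y | ⟨j, y⟩) h
    · exact G₀.adj_symm h
    · trivial
    · trivial
    · obtain ⟨h, hadj⟩ := h
      dsimp only at h
      subst h
      exact ⟨rfl, (G i).adj_symm hadj⟩
  loopless := by
    constructor
    rintro (x | ⟨i, x⟩) h
    · exact G₀.irrefl h
    · obtain ⟨h', hadj⟩ := h
      exact (G i).irrefl hadj

/-- The semistar `K_{b₀}(c₁, …, c_k)`: the join of the clique `K_{b₀}` with the disjoint
union of the cliques `K_{c i}`, `i : Fin k`. -/
def SimpleGraph.semistar (b₀ : ℕ) {k : ℕ} (c : Fin k → ℕ) :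
    SimpleGraph (Fin b₀ ⊕ Σ i, Fin (c i)) :=
  SimpleGraph.repJoin (⊤ : SimpleGraph (Fin b₀)) (fun i => (⊤ : SimpleGraph (Fin (c i))))

/-!
Recursive partitionability only asks for connectivity and for partitions into parts that are again
recursively partitionable, so it survives adding edges: an injective graph homomorphism carries
RP vertex sets to RP vertex sets. The semistar `K_s(c₁, …, c_k)` is obtained from `G` by adding
edges: send the cut `S` onto the central clique and each component of `G - S` onto its own clique.
Every edge of `G` lies inside `S`, between `S` and a component, or inside one component, and in
each case its image is an edge of the semistar.
-/

namespace SimpleGraph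

section

variable {V W : Type} [DecidableEq V] [DecidableEq W] {G : SimpleGraph V} {H : SimpleGraph W}

omit [DecidableEq V] in
lemma Connected.induce_image (φ : G →g H) {A : Finset V} (hA : (G.induce (A : Set V)).Connected) :
    (H.induce (A.image φ : Set W)).Connected := by
  refine hA.map (induceHom φ fun v hv => by simpa using ⟨v, hv, rfl⟩) ?_
  rintro ⟨w, hw⟩
  obtain ⟨v, hv, rfl⟩ := Finset.mem_image.mp hw
  exact ⟨⟨v, hv⟩, rfl⟩

lemma foldr_union_map_image (f : V → W) (P : List (Finset V)) :
    (P.map (·.image f)).foldr (· ∪ ·) ∅ = (P.foldr (· ∪ ·) ∅).image f := by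
  rw [List.foldr_map, ← Finset.image_empty f]
  exact List.foldr_hom _ fun B A => (Finset.image_union B A).symm

theorem IsRP.image (φ : G →g H) (hφ : Function.Injective φ) {A : Finset V} (hA : G.IsRP A) :
    H.IsRP (A.image φ) := by
  induction hn : A.card using Nat.strong_induction_on generalizing A with
  | _ n ih =>
  have hcard : ∀ B : Finset V, (B.image φ).card = B.card := fun B => card_image_of_injective B hφ
  unfold IsRP at hA ⊢
  rw [hcard]
  refine hA.imp id fun ⟨hconn, hpart⟩ => ⟨hconn.induce_image φ, fun l hl hlen hsum => ?_⟩
  obtain ⟨P, hPl, hPd, hPu, hPrp⟩ := hpart l hl hlen hsum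
  refine ⟨P.map (·.image φ), by simp [Function.comp_def, hcard, ← hPl],
    List.pairwise_map.mpr (hPd.imp (disjoint_image hφ).mpr),
    by rw [foldr_union_map_image, hPu], ?_⟩
  simp only [List.mem_map, forall_exists_index, and_imp]
  rintro _ B hB rfl hlt
  rw [hcard] at hlt
  exact ih _ (hn ▸ hlt) (hPrp B hB hlt) rfl

end

variable {s k : ℕ} {c : Fin k → ℕ}

lemma semistar_adj_inl_inl {x y : Fin s} :
    (semistar s c).Adj (.inl x) (.inl y) ↔ x ≠ y := Iff.rfl

lemma semistar_adj_inl_inr (x : Fin s) (a : Σ i, Fin (c i)) :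
    (semistar s c).Adj (.inl x) (.inr a) := trivial

lemma semistar_adj_inr_inr {a b : Σ i, Fin (c i)} :
    (semistar s c).Adj (.inr a) (.inr b) ↔ a.1 = b.1 ∧ a ≠ b := by
  obtain ⟨i, x⟩ := a
  obtain ⟨j, y⟩ := b
  constructor
  · rintro ⟨hij, hxy⟩
    dsimp only at hij
    subst hij
    exact ⟨rfl, fun h => hxy (Sigma.mk.inj_iff.mp h).2.eq⟩
  · rintro ⟨rfl, hxy⟩
    exact ⟨rfl, fun h => hxy (congrArg _ h)⟩

lemma ConnectedComponent.exists_equiv_sigma_fin {W : Type} [Finite W] {H : SimpleGraph W}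
    (e : H.ConnectedComponent ≃ Fin k) (hc : ∀ i, c i = Nat.card (e.symm i).supp) :
    ∃ g : W ≃ Σ i, Fin (c i), ∀ w, (g w).1 = e (H.connectedComponentMk w) := by
  let F := fun w => e (H.connectedComponentMk w)
  have hfiber : ∀ i, Nat.card {w // F w = i} = c i := fun i => by
    rw [hc i]
    exact Nat.card_congr (Equiv.subtypeEquivRight fun w => by
      rw [ConnectedComponent.mem_supp_iff, Equiv.eq_symm_apply])
  exact ⟨(Equiv.sigmaFiberEquiv F).symm.trans
    (Equiv.sigmaCongrRight fun i => Finite.equivFinOfCardEq (hfiber i)), fun w => rfl⟩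

theorem exists_bijective_hom_semistar {V : Type} [Finite V] (G : SimpleGraph V) (S : Finset V)
    (hs : S.card = s) (e : (G.induce ((↑S : Set V)ᶜ)).ConnectedComponent ≃ Fin k)
    (hc : ∀ i, c i = Nat.card (e.symm i).supp) :
    ∃ φ : G →g semistar s c, Function.Bijective φ := by
  classical
  obtain ⟨g, hg⟩ := ConnectedComponent.exists_equiv_sigma_fin e hc
  let f₀ : (↑S : Set V) ≃ Fin s := Finite.equivFinOfCardEq (by simp [hs])
  let σ := Equiv.Set.sumCompl (↑S : Set V)
  have hadj : ∀ x y, G.Adj (σ x) (σ y) →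
      (semistar s c).Adj (Sum.map f₀ g x) (Sum.map f₀ g y) := by
    rintro (x | x) (y | y) h
    · exact semistar_adj_inl_inl.mpr (f₀.injective.ne fun heq => h.ne (by rw [heq]))
    · exact semistar_adj_inl_inr _ _
    · exact (semistar_adj_inl_inr _ _).symm
    · have hxy : (G.induce _).Adj x y := h
      refine semistar_adj_inr_inr.mpr ⟨?_, g.injective.ne fun heq => h.ne (by rw [heq])⟩
      rw [hg, hg, ConnectedComponent.sound hxy.reachable]
  refine ⟨⟨σ.symm.trans (Equiv.sumCongr f₀ g), fun {u v} h => ?_⟩, Equiv.bijective _⟩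
  exact hadj (σ.symm u) (σ.symm v) (by simpa using h)

end SimpleGraph

theorem semistar_isRP_of_isRP_general {V : Type} [Fintype V] [DecidableEq V]
    (G : SimpleGraph V) (S : Finset V) (s k : ℕ) (hs : S.card = s)
    (c : Fin k → ℕ)
    (e : (G.induce ((↑S : Set V)ᶜ)).ConnectedComponent ≃ Fin k)
    (hc : ∀ i : Fin k, c i = Nat.card (e.symm i).supp)
    (hG : G.IsRP Finset.univ) :
    (SimpleGraph.semistar s c).IsRP Finset.univ := by
  obtain ⟨φ, hφ⟩ := SimpleGraph.exists_bijective_hom_semistar G S hs e hc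
  simpa [Finset.image_univ_of_surjective hφ.2] using hG.image φ hφ.1

/-- If `S` is an `s`-vertex cut of a recursively partitionable graph `G` and the components
of `G − S` have sizes `c₁, …, c_k`, then the semistar `K_s(c₁, …, c_k)` is recursively
partitionable. -/
theorem semistar_isRP_of_isRP {V : Type} [Fintype V] [DecidableEq V]
    (G : SimpleGraph V) (S : Finset V) (s k : ℕ) (hs : S.card = s)
    (c : Fin k → ℕ)
    (e : (G.induce ((↑S : Set V)ᶜ)).ConnectedComponent ≃ Fin k)
    (hc : ∀ i : Fin k, c i = Nat.card (e.symm i).supp)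
    (hcut : ¬ (G.induce ((↑S : Set V)ᶜ)).Connected) (hk : 2 ≤ k)
    (hG : G.IsRP Finset.univ) :
    (SimpleGraph.semistar s c).IsRP Finset.univ :=
  semistar_isRP_of_isRP_general G S s k hs c e hc hG
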